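/- For Shamir secret sharing: if the coefficients f_1, ..., f_h of the polynomial f(X) = s + f_1 X + ... + f_h X^h are chosen uniformly at random in F_p, then for any set of at most h distinct nonzero evaluation points, the joint distribution of the shares (f(i)) at those points is uniform on F_p^h and in particular independent of the secret s. -/

import Mathlib

/-!
The map sending a coefficient vector `c` to the shares minus the secret, `i ↦ ∑ j, c j * i ^ (j + 1)`,
is linear, and it is onto `F_p^T` by Lagrange interpolation: if `q` interpolates `w i / i` on `T`,
then `deg q < |T| ≤ h` and `X * q` takes the values `w`. So each fibre is a coset of a kernel of
dimension `h - |T|`, whatever the secret.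
-/

open Finset Polynomial

theorem card_filter_apply_eq_card_filter_apply_eq_zero {F G H : Type*} [AddGroup G] [Fintype G]
    [AddGroup H] [DecidableEq H] [FunLike F G H] [AddMonoidHomClass F G H] (f : F) (x₀ : G) :
    #{x | f x = f x₀} = #{x | f x = 0} := by
  refine card_nbij' (· - x₀) (· + x₀) ?_ ?_ ?_ ?_ <;> intro x <;> simp +contextual [map_sub]

section

variable {K V W : Type*} [Field K] [Fintype K] [AddCommGroup V] [Module K V] [Fintype V]
  [AddCommGroup W] [Module K W] [DecidableEq W]

theorem LinearMap.card_filter_apply_eq_zero (L : V →ₗ[K] W) :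
    #{x | L x = 0} = Fintype.card K ^ Module.finrank K (LinearMap.ker L) := by
  classical
  rw [← Module.card_eq_pow_finrank, Fintype.card_subtype]
  simp [LinearMap.mem_ker]

theorem LinearMap.card_filter_apply_eq_of_surjective (L : V →ₗ[K] W)
    (hL : Function.Surjective L) (w : W) :
    #{x | L x = w} = Fintype.card K ^ (Module.finrank K V - Module.finrank K W) := by
  have hrank := L.finrank_range_add_finrank_ker
  rw [LinearMap.range_eq_top.2 hL, finrank_top] at hrank
  obtain ⟨x₀, rfl⟩ := hL w
  rw [card_filter_apply_eq_card_filter_apply_eq_zero, L.card_filter_apply_eq_zero]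
  congr 1
  omega

end

theorem Polynomial.sum_fin_coeff_mul_pow_succ {R : Type*} [CommSemiring R] {q : R[X]} {n : ℕ}
    (hq : q.degree < n) (x : R) :
    ∑ j : Fin n, q.coeff j * x ^ ((j : ℕ) + 1) = x * q.eval x := by
  rw [sum_fin (fun j a => a * x ^ (j + 1)) (by simp) hq, eval_eq_sum, sum_def, sum_def, mul_sum]
  exact sum_congr rfl fun j _ => by ring

variable {K : Type*} [Field K]

def shareMap (h : ℕ) (T : Finset K) : (Fin h → K) →ₗ[K] (T → K) where
  toFun c i := ∑ j, c j * (i : K) ^ ((j : ℕ) + 1)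
  map_add' a b := by ext; simp [add_mul, sum_add_distrib]
  map_smul' m a := by ext; simp [mul_sum, mul_assoc]

@[simp]
theorem shareMap_apply (h : ℕ) (T : Finset K) (c : Fin h → K) (i : T) :
    shareMap h T c i = ∑ j, c j * (i : K) ^ ((j : ℕ) + 1) := rfl

theorem shareMap_surjective [DecidableEq K] {h : ℕ} {T : Finset K} (hT : #T ≤ h) (h0 : 0 ∉ T) :
    Function.Surjective (shareMap h T) := by
  intro w
  let q := Lagrange.interpolate T id fun x => x⁻¹ * if hx : x ∈ T then w ⟨x, hx⟩ else 0
  have hq : q.degree < h :=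
    (Lagrange.degree_interpolate_lt _ (Set.injOn_id _)).trans_le (by exact_mod_cast hT)
  refine ⟨fun j => q.coeff j, funext fun i => ?_⟩
  have hi0 : (i : K) ≠ 0 := fun hi => h0 (hi ▸ i.2)
  rw [shareMap_apply, sum_fin_coeff_mul_pow_succ hq, ← id_eq (i : K),
    Lagrange.eval_interpolate_at_node _ (Set.injOn_id _) i.2, id_eq, dif_pos i.2,
    mul_inv_cancel_left₀ hi0]

/-- Privacy of Shamir secret sharing: with uniformly random coefficients
`c : Fin h → F_p` for `f(X) = s + ∑ c j · X^(j+1)`, for any set `T` of at most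
`h` distinct nonzero evaluation points and any target share values `v`, the
number of coefficient vectors realizing those shares is `p^(h - |T|)` — in
particular independent of the secret `s`, so the shares are jointly uniform. -/
theorem shamir_privacy (p h : ℕ) [Fact p.Prime] (s : ZMod p)
    (T : Finset (ZMod p)) (hT : T.card ≤ h) (h0 : (0 : ZMod p) ∉ T)
    (v : ZMod p → ZMod p) :
    (Finset.univ.filter (fun c : Fin h → ZMod p =>
        ∀ i ∈ T, s + ∑ j, c j * i ^ ((j : ℕ) + 1) = v i)).card
      = p ^ (h - T.card) := by
  classical
  have hshares : ∀ c : Fin h → ZMod p, (∀ i ∈ T, s + ∑ j, c j * i ^ ((j : ℕ) + 1) = v i) ↔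
      shareMap h T c = fun i : T => v i - s := by
    simp [funext_iff, eq_sub_iff_add_eq, add_comm]
  simp_rw [hshares]
  rw [(shareMap h T).card_filter_apply_eq_of_surjective (shareMap_surjective hT h0), ZMod.card,
    Module.finrank_fin_fun, Module.finrank_fintype_fun_eq_card, Fintype.card_coe]
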